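/- arXiv:2308.13350 — 4 statements merged into one kernel-verified Lean document; each statement's English description precedes it below -/
import Mathlib

section
/- Let f:ℝ^m→ℝ^p and g:ℝ^n→ℝ^p be C^1 maps with isolated critical value 0 (i.e. Sing f ⊆ f⁻¹(0) and Sing g ⊆ g⁻¹(0)), and let G(x,y)=f(x)+g(y). Then Sing G ⊆ Sing f × Sing g, and Sing f × Sing g ⊆ G⁻¹(0); consequently G has isolated critical value 0 (Sing G ⊆ G⁻¹(0)). -/
noncomputable section

/-- The singular set of a map into `ℝ^p`: points where the derivative is not surjective
(rank `< p`). -/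
def SingSet {X : Type*} [NormedAddCommGroup X] [NormedSpace ℝ X]
    {p : ℕ} (Φ : X → EuclideanSpace ℝ (Fin p)) : Set X :=
  {x | ¬ Function.Surjective (fderiv ℝ Φ x)}

/-! The derivative of `(x, y) ↦ f x + g y` is `Df(x).coprod Dg(y)`, which is onto as soon as
one of `Df(x)`, `Dg(y)` is; so a critical point of the sum is critical for both summands, and
there both `f` and `g` vanish. -/

open Function ContinuousLinearMap

namespace ContinuousLinearMap

variable {R M₁ M₂ M : Type*} [Semiring R] [TopologicalSpace M₁] [TopologicalSpace M₂]
  [TopologicalSpace M] [AddCommMonoid M₁] [AddCommMonoid M₂] [AddCommMonoid M] [Module R M₁]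
  [Module R M₂] [Module R M] [ContinuousAdd M]

theorem coprod_surjective_of_left {f₁ : M₁ →L[R] M} (f₂ : M₂ →L[R] M) (h : Surjective f₁) :
    Surjective (f₁.coprod f₂) :=
  Surjective.of_comp (g := inl R M₁ M₂) (by simpa [← coe_comp] using h)

theorem coprod_surjective_of_right (f₁ : M₁ →L[R] M) {f₂ : M₂ →L[R] M} (h : Surjective f₂) :
    Surjective (f₁.coprod f₂) :=
  Surjective.of_comp (g := inr R M₁ M₂) (by simpa [← coe_comp] using h)

end ContinuousLinearMap

section

variable {E F H : Type*} [NormedAddCommGroup E] [NormedSpace ℝ E] [NormedAddCommGroup F]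
  [NormedSpace ℝ F] [NormedAddCommGroup H] [NormedSpace ℝ H]

theorem fderiv_add_comp_fst_snd {f : E → H} {g : F → H} {z : E × F}
    (hf : DifferentiableAt ℝ f z.1) (hg : DifferentiableAt ℝ g z.2) :
    fderiv ℝ (fun z : E × F => f z.1 + g z.2) z = (fderiv ℝ f z.1).coprod (fderiv ℝ g z.2) :=
  ((hf.hasFDerivAt.comp z hasFDerivAt_fst).add (hg.hasFDerivAt.comp z hasFDerivAt_snd)).fderiv

theorem singSet_add_subset_prod {p : ℕ} {f : E → EuclideanSpace ℝ (Fin p)}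
    {g : F → EuclideanSpace ℝ (Fin p)} (hf : Differentiable ℝ f) (hg : Differentiable ℝ g) :
    SingSet (fun z : E × F => f z.1 + g z.2) ⊆ SingSet f ×ˢ SingSet g := by
  intro z hz
  rw [SingSet, Set.mem_ofPred_eq, fderiv_add_comp_fst_snd (hf _) (hg _)] at hz
  exact ⟨fun hfz => hz (coprod_surjective_of_left _ hfz),
    fun hgz => hz (coprod_surjective_of_right _ hgz)⟩

end

theorem prod_subset_preimage_zero_add {X Y M : Type*} [AddZeroClass M] {f : X → M} {g : Y → M}
    {S : Set X} {T : Set Y} (hS : S ⊆ f ⁻¹' {0}) (hT : T ⊆ g ⁻¹' {0}) :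
    S ×ˢ T ⊆ (fun z : X × Y => f z.1 + g z.2) ⁻¹' {0} := by
  rintro ⟨x, y⟩ ⟨hx, hy⟩
  have hfx : f x = 0 := hS hx
  have hgy : g y = 0 := hT hy
  simp [hfx, hgy]

/-- If `f : ℝ^m → ℝ^p` and `g : ℝ^n → ℝ^p` are `C¹` maps with isolated critical value `0`
and `G(x,y) = f(x) + g(y)`, then `Sing G ⊆ Sing f × Sing g ⊆ G⁻¹(0)`; consequently `G` has
isolated critical value `0`. -/
theorem sing_sum_separable {m n p : ℕ}
    (f : EuclideanSpace ℝ (Fin m) → EuclideanSpace ℝ (Fin p))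
    (g : EuclideanSpace ℝ (Fin n) → EuclideanSpace ℝ (Fin p))
    (hf : ContDiff ℝ 1 f) (hg : ContDiff ℝ 1 g)
    (hfv : SingSet f ⊆ f ⁻¹' {0}) (hgv : SingSet g ⊆ g ⁻¹' {0}) :
    SingSet (fun z : EuclideanSpace ℝ (Fin m) × EuclideanSpace ℝ (Fin n) => f z.1 + g z.2)
        ⊆ SingSet f ×ˢ SingSet g ∧
    SingSet f ×ˢ SingSet g ⊆
      (fun z : EuclideanSpace ℝ (Fin m) × EuclideanSpace ℝ (Fin n) => f z.1 + g z.2) ⁻¹' {0} ∧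
    SingSet (fun z : EuclideanSpace ℝ (Fin m) × EuclideanSpace ℝ (Fin n) => f z.1 + g z.2)
        ⊆ (fun z : EuclideanSpace ℝ (Fin m) × EuclideanSpace ℝ (Fin n) => f z.1 + g z.2) ⁻¹' {0} := by
  have hsing := singSet_add_subset_prod (hf.differentiable one_ne_zero) (hg.differentiable one_ne_zero)
  have hzero := prod_subset_preimage_zero_add hfv hgv
  exact ⟨hsing, hzero, hsing.trans hzero⟩
end
end

section
/- Let f:(ℂ^m,0)→(ℂ,0) be a real-differentiable (mixed) function, viewed as a map ℝ^{2m}→ℝ². Then f is horizontally weakly conformal (the gradients of Re f and Im f are orthogonal and of equal length at every point) if and only if ⟨ conj(df(z)), d̄f(z) ⟩_ℂ = 0 at every point z, where df=(∂f/∂z₁,…,∂f/∂z_m) and d̄f=(∂f/∂z̄₁,…,∂f/∂z̄_m) are the holomorphic and anti-holomorphic gradients and ⟨·,·⟩_ℂ is the Hermitian product. -/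
open scoped RealInnerProductSpace

noncomputable section

/-- The model for `ℂ^m ≅ ℝ^{2m}`: a point `w` represents `z = w.1 + i w.2`. -/
abbrev CSpace (m : ℕ) := WithLp 2 (EuclideanSpace ℝ (Fin m) × EuclideanSpace ℝ (Fin m))

/-- The holomorphic (Wirtinger) gradient `∂f/∂z_j = (∂f/∂x_j - i ∂f/∂y_j)/2`. -/
def wdz {m : ℕ} (f : CSpace m → ℂ) (w : CSpace m) (j : Fin m) : ℂ :=
  (1 / 2 : ℂ) *
    (fderiv ℝ f w ((WithLp.equiv 2 _).symm (EuclideanSpace.single j 1, 0)) -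
      Complex.I * fderiv ℝ f w ((WithLp.equiv 2 _).symm (0, EuclideanSpace.single j 1)))

/-- The anti-holomorphic (Wirtinger) gradient `∂f/∂z̄_j = (∂f/∂x_j + i ∂f/∂y_j)/2`. -/
def wdzbar {m : ℕ} (f : CSpace m → ℂ) (w : CSpace m) (j : Fin m) : ℂ :=
  (1 / 2 : ℂ) *
    (fderiv ℝ f w ((WithLp.equiv 2 _).symm (EuclideanSpace.single j 1, 0)) +
      Complex.I * fderiv ℝ f w ((WithLp.equiv 2 _).symm (0, EuclideanSpace.single j 1)))

/-- `f` is horizontally weakly conformal at every point: the real gradients of `Re f` and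
`Im f` are orthogonal and have equal norms. -/
def IsHWC {m : ℕ} (f : CSpace m → ℂ) : Prop :=
  ∀ w : CSpace m,
    ⟪gradient (fun w => (f w).re) w, gradient (fun w => (f w).im) w⟫ = 0 ∧
    ‖gradient (fun w => (f w).re) w‖ = ‖gradient (fun w => (f w).im) w‖

/-!
For any orthonormal basis `(e_k)` of `ℝ^{2m}` and `L = df(w)`, we have
`L(e_k) = ⟪∇Re f, e_k⟫ + i ⟪∇Im f, e_k⟫`, so Parseval gives
`∑ₖ L(e_k)² = ‖∇Re f‖² - ‖∇Im f‖² + 2i ⟪∇Re f, ∇Im f⟫`, which vanishes exactly when `f` is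
horizontally weakly conformal at `w`. For the standard basis,
`∂f/∂z_j · ∂f/∂z̄_j = (L(∂_{x_j})² + L(∂_{y_j})²) / 4`, so the Wirtinger sum is `∑ₖ L(e_k)² / 4`.
-/

open Finset in
theorem Complex.sum_sq_eq_zero_iff {ι : Type*} (s : Finset ι) (z : ι → ℂ) :
    ∑ i ∈ s, z i ^ 2 = 0 ↔
      ∑ i ∈ s, (z i).re * (z i).im = 0 ∧ ∑ i ∈ s, (z i).re ^ 2 = ∑ i ∈ s, (z i).im ^ 2 := by
  have hre : (∑ i ∈ s, z i ^ 2).re = ∑ i ∈ s, (z i).re ^ 2 - ∑ i ∈ s, (z i).im ^ 2 := by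
    simp only [re_sum, ← sum_sub_distrib, sq, mul_re]
  have him : (∑ i ∈ s, z i ^ 2).im = 2 * ∑ i ∈ s, (z i).re * (z i).im := by
    simp only [im_sum, mul_sum, sq, mul_im]
    exact sum_congr rfl fun i _ => by ring
  rw [Complex.ext_iff, hre, him, zero_re, zero_im, sub_eq_zero, mul_eq_zero]
  simp only [two_ne_zero, false_or]
  exact and_comm

section Gradient

variable {E F : Type*} [NormedAddCommGroup E] [InnerProductSpace ℝ E] [CompleteSpace E]
  [NormedAddCommGroup F] [NormedSpace ℝ F]

theorem inner_gradient_clm_comp (φ : F →L[ℝ] ℝ) {g : E → F} {x : E}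
    (hg : DifferentiableAt ℝ g x) (v : E) :
    ⟪gradient (fun y => φ (g y)) x, v⟫ = φ (fderiv ℝ g x v) := by
  rw [gradient, InnerProductSpace.toDual_symm_apply, fderiv_fun_comp x φ.differentiableAt hg,
    ContinuousLinearMap.fderiv]
  rfl

theorem inner_gradient_re_im_eq_zero_and_norm_eq_iff {ι : Type*} [Fintype ι]
    (b : OrthonormalBasis ι ℝ E) {g : E → ℂ} {x : E} (hg : DifferentiableAt ℝ g x) :
    (⟪gradient (fun y => (g y).re) x, gradient (fun y => (g y).im) x⟫ = 0 ∧
        ‖gradient (fun y => (g y).re) x‖ = ‖gradient (fun y => (g y).im) x‖) ↔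
      ∑ i, fderiv ℝ g x (b i) ^ 2 = 0 := by
  have hre (v : E) : ⟪gradient (fun y => (g y).re) x, v⟫ = (fderiv ℝ g x v).re :=
    inner_gradient_clm_comp Complex.reCLM hg v
  have him (v : E) : ⟪gradient (fun y => (g y).im) x, v⟫ = (fderiv ℝ g x v).im :=
    inner_gradient_clm_comp Complex.imCLM hg v
  rw [Complex.sum_sq_eq_zero_iff, ← sq_eq_sq₀ (norm_nonneg _) (norm_nonneg _),
    ← b.sum_inner_mul_inner, ← b.sum_sq_inner_left, ← b.sum_sq_inner_left]
  simp only [real_inner_comm _ (b _), hre, him]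

end Gradient

namespace CSpace

def stdBasis (m : ℕ) : OrthonormalBasis (Fin m ⊕ Fin m) ℝ (CSpace m) :=
  (EuclideanSpace.basisFun (Fin m) ℝ).prod (EuclideanSpace.basisFun (Fin m) ℝ)

theorem sum_wdz_mul_wdzbar {m : ℕ} (f : CSpace m → ℂ) (w : CSpace m) :
    ∑ j, wdz f w j * wdzbar f w j = (∑ k, fderiv ℝ f w (stdBasis m k) ^ 2) / 4 := by
  rw [Fintype.sum_sum_type, ← Finset.sum_add_distrib, Finset.sum_div]
  refine Finset.sum_congr rfl fun j _ => ?_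
  simp only [wdz, wdzbar, stdBasis, OrthonormalBasis.prod_apply, Sum.elim_inl, Sum.elim_inr,
    Function.comp_apply, LinearMap.inl_apply, LinearMap.inr_apply, EuclideanSpace.basisFun_apply,
    WithLp.equiv_symm_apply]
  linear_combination
    -(fderiv ℝ f w (WithLp.toLp 2 (0, EuclideanSpace.single j 1)) ^ 2 / 4) * Complex.I_sq

end CSpace

/-- A real-differentiable mixed function `f : ℂ^m → ℂ` is horizontally weakly conformal
iff the Hermitian product `⟨conj(df), d̄f⟩_ℂ = ∑_j (∂f/∂z_j)(∂f/∂z̄_j)` vanishes at every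
point. -/
theorem hwc_iff_wirtinger {m : ℕ} (f : CSpace m → ℂ) (hf : Differentiable ℝ f) :
    IsHWC f ↔ ∀ w : CSpace m, ∑ j : Fin m, wdz f w j * wdzbar f w j = 0 := by
  refine forall_congr' fun w => ?_
  rw [inner_gradient_re_im_eq_zero_and_norm_eq_iff (CSpace.stdBasis m) (hf w),
    CSpace.sum_wdz_mul_wdzbar,
    div_eq_zero_iff, or_iff_left (by norm_num)]
end
end

section
/- Let G₁,G₂,G₃,G₄:ℝ^{2n}→ℝ be C^1 functions such that (G₁,G₂) and (G₃,G₄) are horizontally weakly conformal maps into ℝ², and suppose ⟨∇G₁,∇G₃⟩−⟨∇G₂,∇G₄⟩=0 and ⟨∇G₁,∇G₄ ⟩+⟨∇G₂,∇G₃⟩=0 at every point. Then the map (G₁G₃−G₂G₄, G₁G₄+G₂G₃):ℝ^{2n}→ℝ² is horizontally weakly conformal. -/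
open scoped RealInnerProductSpace

noncomputable section

/-- A pair `(H₁, H₂)` of real functions is horizontally weakly conformal if at every point
`⟨∇H₁, ∇H₂⟩ = 0` and `‖∇H₁‖² = ‖∇H₂‖²`. -/
def IsHWCPair {E : Type*} [NormedAddCommGroup E] [InnerProductSpace ℝ E] [CompleteSpace E]
    (H₁ H₂ : E → ℝ) : Prop :=
  ∀ x : E, ⟪gradient H₁ x, gradient H₂ x⟫ = 0 ∧
    ‖gradient H₁ x‖ ^ 2 = ‖gradient H₂ x‖ ^ 2

/-!
Read a pair `(a, b)` of vectors as `a + i b` in the complexification of `E`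
(`complexSMul` is the resulting ℂ-action), and let `complexPairing` be the ℂ-bilinear extension
`B` of the inner product. Then `(H₁, H₂)` is horizontally weakly conformal exactly when
`B(∇H, ∇H) = 0` for `H = H₁ + i H₂`, and the two cross conditions say `B(∇G, ∇G') = 0` for
`G = G₁ + i G₂`, `G' = G₃ + i G₄`. The Leibniz rule `∇(G G') = G' ∇G + G ∇G'` and bilinearity give
`B(∇(G G'), ∇(G G')) = G'² B(∇G, ∇G) + 2 G G' B(∇G, ∇G') + G² B(∇G', ∇G') = 0`.
-/

section Gradient

variable {E : Type*} [NormedAddCommGroup E] [InnerProductSpace ℝ E] [CompleteSpace E]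
  {f g : E → ℝ} {f' g' x : E}

theorem HasGradientAt.add (hf : HasGradientAt f f' x) (hg : HasGradientAt g g' x) :
    HasGradientAt (fun y => f y + g y) (f' + g') x := by
  rw [hasGradientAt_iff_hasFDerivAt] at hf hg ⊢
  simpa only [map_add] using hf.fun_add hg

theorem HasGradientAt.sub (hf : HasGradientAt f f' x) (hg : HasGradientAt g g' x) :
    HasGradientAt (fun y => f y - g y) (f' - g') x := by
  rw [hasGradientAt_iff_hasFDerivAt] at hf hg ⊢
  simpa only [map_sub] using hf.fun_sub hg

theorem HasGradientAt.mul (hf : HasGradientAt f f' x) (hg : HasGradientAt g g' x) :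
    HasGradientAt (fun y => f y * g y) (g x • f' + f x • g') x := by
  rw [hasGradientAt_iff_hasFDerivAt] at hf hg ⊢
  simpa only [map_add, map_smul, add_comm] using hf.fun_mul hg

end Gradient

section ComplexPairing

variable {E : Type*} [NormedAddCommGroup E] [InnerProductSpace ℝ E]

def complexPairing (p q : E × E) : ℂ :=
  ⟨⟪p.1, q.1⟫ - ⟪p.2, q.2⟫, ⟪p.1, q.2⟫ + ⟪p.2, q.1⟫⟩

def complexSMul (z : ℂ) (p : E × E) : E × E :=
  (z.re • p.1 - z.im • p.2, z.re • p.2 + z.im • p.1)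

theorem complexPairing_self_eq_zero_iff (a b : E) :
    complexPairing (a, b) (a, b) = 0 ↔ ⟪a, b⟫ = 0 ∧ ‖a‖ ^ 2 = ‖b‖ ^ 2 := by
  rw [Complex.ext_iff, and_comm]
  simp only [complexPairing, Complex.zero_re, Complex.zero_im, real_inner_self_eq_norm_sq,
    real_inner_comm a b, sub_eq_zero]
  constructor <;> rintro ⟨h, h'⟩ <;> exact ⟨by linarith, h'⟩

theorem complexPairing_self_complexSMul_add (z w : ℂ) (p q : E × E) :
    complexPairing (complexSMul z p + complexSMul w q) (complexSMul z p + complexSMul w q) =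
      z ^ 2 * complexPairing p p + 2 * z * w * complexPairing p q +
        w ^ 2 * complexPairing q q := by
  obtain ⟨a, b⟩ := p
  obtain ⟨c, d⟩ := q
  apply Complex.ext <;>
  · simp only [complexPairing, complexSMul, Prod.fst_add, Prod.snd_add, inner_add_left,
      inner_add_right, inner_sub_left, inner_sub_right, real_inner_smul_left,
      real_inner_smul_right, real_inner_comm b a, real_inner_comm c a, real_inner_comm d a,
      real_inner_comm c b, real_inner_comm d b, real_inner_comm d c, pow_two, Complex.add_re,
      Complex.add_im, Complex.mul_re, Complex.mul_im, Complex.re_ofNat, Complex.im_ofNat]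
    ring

end ComplexPairing

section ComplexProduct

variable {E : Type*} [NormedAddCommGroup E] [InnerProductSpace ℝ E] [CompleteSpace E]

theorem isHWCPair_iff {H₁ H₂ : E → ℝ} :
    IsHWCPair H₁ H₂ ↔
      ∀ x, complexPairing (gradient H₁ x, gradient H₂ x) (gradient H₁ x, gradient H₂ x) = 0 := by
  simp only [IsHWCPair, complexPairing_self_eq_zero_iff]

theorem gradient_complexProduct {G₁ G₂ G₃ G₄ : E → ℝ} {x : E} (h₁ : DifferentiableAt ℝ G₁ x)
    (h₂ : DifferentiableAt ℝ G₂ x) (h₃ : DifferentiableAt ℝ G₃ x)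
    (h₄ : DifferentiableAt ℝ G₄ x) :
    (gradient (fun x => G₁ x * G₃ x - G₂ x * G₄ x) x,
        gradient (fun x => G₁ x * G₄ x + G₂ x * G₃ x) x) =
      complexSMul ⟨G₃ x, G₄ x⟩ (gradient G₁ x, gradient G₂ x) +
        complexSMul ⟨G₁ x, G₂ x⟩ (gradient G₃ x, gradient G₄ x) := by
  have d₁ := h₁.hasGradientAt
  have d₂ := h₂.hasGradientAt
  have d₃ := h₃.hasGradientAt
  have d₄ := h₄.hasGradientAt
  rw [((d₁.mul d₃).sub (d₂.mul d₄)).gradient, ((d₁.mul d₄).add (d₂.mul d₃)).gradient]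
  ext <;> simp only [complexSMul, Prod.fst_add, Prod.snd_add] <;> abel

end ComplexProduct

/-- If `(G₁,G₂)` and `(G₃,G₄)` are horizontally weakly conformal on `ℝ^{2n}` and the
cross-compatibility conditions `⟨∇G₁,∇G₃⟩ − ⟨∇G₂,∇G₄⟩ = 0` and
`⟨∇G₁,∇G₄⟩ + ⟨∇G₂,∇G₃⟩ = 0` hold everywhere, then
`(G₁G₃ − G₂G₄, G₁G₄ + G₂G₃)` is horizontally weakly conformal. -/
theorem hwc_complex_product {n : ℕ}
    (G₁ G₂ G₃ G₄ : EuclideanSpace ℝ (Fin (2 * n)) → ℝ)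
    (h₁ : ContDiff ℝ 1 G₁) (h₂ : ContDiff ℝ 1 G₂) (h₃ : ContDiff ℝ 1 G₃)
    (h₄ : ContDiff ℝ 1 G₄)
    (hwc12 : IsHWCPair G₁ G₂) (hwc34 : IsHWCPair G₃ G₄)
    (hcross1 : ∀ x, ⟪gradient G₁ x, gradient G₃ x⟫ - ⟪gradient G₂ x, gradient G₄ x⟫ = 0)
    (hcross2 : ∀ x, ⟪gradient G₁ x, gradient G₄ x⟫ + ⟪gradient G₂ x, gradient G₃ x⟫ = 0) :
    IsHWCPair (fun x => G₁ x * G₃ x - G₂ x * G₄ x) (fun x => G₁ x * G₄ x + G₂ x * G₃ x) := by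
  rw [isHWCPair_iff] at hwc12 hwc34 ⊢
  intro x
  have hcross : complexPairing (gradient G₁ x, gradient G₂ x) (gradient G₃ x, gradient G₄ x) = 0 :=
    Complex.ext (hcross1 x) (hcross2 x)
  rw [gradient_complexProduct (h₁.differentiable one_ne_zero x) (h₂.differentiable one_ne_zero x)
    (h₃.differentiable one_ne_zero x) (h₄.differentiable one_ne_zero x),
    complexPairing_self_complexSMul_add, hwc12 x, hwc34 x, hcross]
  ring
end
end

section
/- The map G:ℝ³→ℝ² given by G(x,y,z)=(xy,xz) satisfies the Milnor condition (b) at the origin: the closure of M(G)∖V_G intersected with V_G is contained in {0}, where V_G={x=0}∪{y=z=0} and M(G)={x=0}∪{x²−y²−z²=0}. -/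
/-!
Off `V_G` the branch `{x = 0}` of `M(G)` disappears, so `M(G) ∖ V_G` lies in the closed cone
`x² = y² + z²`, and so does its closure. On that cone the equations `xy = xz = 0` of `V_G` give
`x⁴ = x² (y² + z²) = 0`, hence `x = 0` and then `y = z = 0`.
-/

noncomputable section

/-- The zero set `V_G` of `G(x,y,z) = (xy, xz)`, i.e. `{x = 0} ∪ {y = z = 0}`. -/
def VG : Set (EuclideanSpace ℝ (Fin 3)) :=
  {p | p 0 * p 1 = 0 ∧ p 0 * p 2 = 0}

/-- The Milnor set `M(G)` of `G(x,y,z) = (xy, xz)`: `{x = 0} ∪ {x² − y² − z² = 0}`. -/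
def MG : Set (EuclideanSpace ℝ (Fin 3)) :=
  {p | p 0 = 0 ∨ (p 0) ^ 2 - (p 1) ^ 2 - (p 2) ^ 2 = 0}

def lightCone : Set (EuclideanSpace ℝ (Fin 3)) :=
  {p | (p 0) ^ 2 - (p 1) ^ 2 - (p 2) ^ 2 = 0}

theorem isClosed_lightCone : IsClosed lightCone :=
  isClosed_eq (by fun_prop) continuous_const

theorem MG_diff_VG_subset_lightCone : MG \ VG ⊆ lightCone := by
  rintro p ⟨hx | hcone, hV⟩
  · exact absurd ⟨by simp [hx], by simp [hx]⟩ hV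
  · exact hcone

theorem eq_zero_of_sq_sub_sq_sub_sq_eq_zero {x y z : ℝ} (hcone : x ^ 2 - y ^ 2 - z ^ 2 = 0)
    (hxy : x * y = 0) (hxz : x * z = 0) : x = 0 ∧ y = 0 ∧ z = 0 := by
  have hx : x = 0 := pow_eq_zero_iff (n := 4) (by norm_num) |>.mp <| by
    linear_combination x ^ 2 * hcone + x * y * hxy + x * z * hxz
  subst hx
  have hyz : y ^ 2 + z ^ 2 = 0 := by linear_combination -hcone
  obtain ⟨hy, hz⟩ := (add_eq_zero_iff_of_nonneg (sq_nonneg y) (sq_nonneg z)).mp hyz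
  exact ⟨rfl, pow_eq_zero_iff two_ne_zero |>.mp hy, pow_eq_zero_iff two_ne_zero |>.mp hz⟩

theorem lightCone_inter_VG_subset_zero : lightCone ∩ VG ⊆ {0} := by
  rintro p ⟨hcone, hxy, hxz⟩
  obtain ⟨hx, hy, hz⟩ := eq_zero_of_sq_sub_sq_sub_sq_eq_zero hcone hxy hxz
  ext i
  fin_cases i <;> assumption

/-- `G(x,y,z) = (xy, xz)` satisfies the Milnor condition (b) at the origin:
`closure (M(G) ∖ V_G) ∩ V_G ⊆ {0}`. -/
theorem milnor_condition_b_xy_xz :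
    closure (MG \ VG) ∩ VG ⊆ {(0 : EuclideanSpace ℝ (Fin 3))} :=
  calc closure (MG \ VG) ∩ VG
      ⊆ lightCone ∩ VG :=
        Set.inter_subset_inter_left _ <|
          closure_minimal MG_diff_VG_subset_lightCone isClosed_lightCone
    _ ⊆ {0} := lightCone_inter_VG_subset_zero
end
end
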